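/- arXiv:2505.08522 — 2 statements merged into one kernel-verified Lean document; each statement's English description precedes it below -/
import Mathlib

section
/- Cardinality-bounded subteam formulas: let N = {p₁,…,p_n}, θ := ⋀_{1≤i≤n} =(p_i), and for l ≥ 1 let φ := Θ_X ∧ (θ ∨ ⋯ ∨ θ) with l disjuncts of θ. Then for every team Y over N: Y ⊨ φ if and only if Y ⊆ X and |Y| ≤ l. -/
/-- PDL-formulas in negation normal form over variables `V`,
including dependence atoms `dep [a₁,…,a_k] b`; `dep [] p` is the
constancy atom `=(p)`. -/
inductive PDL (V : Type) : Type
  | pos : V → PDL V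
  | neg : V → PDL V
  | bot : PDL V
  | top : PDL V
  | dep : List V → V → PDL V
  | conj : PDL V → PDL V → PDL V
  | disj : PDL V → PDL V → PDL V

/-- Team semantics of PDL-formulas. -/
def PDL.tsat {V : Type} : PDL V → Set (V → Bool) → Prop
  | .pos p, X => ∀ v ∈ X, v p = true
  | .neg p, X => ∀ v ∈ X, v p = false
  | .bot, X => X = ∅
  | .top, _ => True
  | .dep as b, X => ∀ v ∈ X, ∀ v' ∈ X, (∀ a ∈ as, v a = v' a) → v b = v' b
  | .conj φ ψ, X => PDL.tsat φ X ∧ PDL.tsat ψ X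
  | .disj φ ψ, X => ∃ Y Z : Set (V → Bool), X = Y ∪ Z ∧ PDL.tsat φ Y ∧ PDL.tsat ψ Z

/-- Finite conjunction of a list of formulas (empty conjunction is `⊤`). -/
def PDL.bigConj {V : Type} (l : List (PDL V)) : PDL V := l.foldr .conj .top

/-- Finite disjunction of a list of formulas (empty disjunction is `⊥`). -/
def PDL.bigDisj {V : Type} (l : List (PDL V)) : PDL V := l.foldr .disj .bot

/-- The conjunction `p₁^{v(p₁)} ∧ ⋯ ∧ p_n^{v(p_n)}` describing the valuation
`v`, where `p^1 = p` and `p^0 = ¬p`. -/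
noncomputable def PDL.lineOf {V : Type} [Fintype V] (v : V → Bool) : PDL V :=
  PDL.bigConj ((Finset.univ : Finset V).toList.map fun p =>
    if v p then .pos p else .neg p)

/-- The formula `Θ_X := ⋁_{v ∈ X} (p₁^{v(p₁)} ∧ ⋯ ∧ p_n^{v(p_n)})`. -/
noncomputable def PDL.Theta {V : Type} [Fintype V] (X : Finset (V → Bool)) : PDL V :=
  PDL.bigDisj (X.toList.map PDL.lineOf)

/-- The formula `θ := ⋀_{p ∈ N} =(p)`. -/
noncomputable def PDL.theta (V : Type) [Fintype V] : PDL V :=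
  PDL.bigConj ((Finset.univ : Finset V).toList.map fun p => .dep [] p)

/-- `disjCopies φ k` is the disjunction `φ ∨ ⋯ ∨ φ` with `k + 1` disjuncts. -/
def PDL.disjCopies {V : Type} (φ : PDL V) : ℕ → PDL V
  | 0 => φ
  | k + 1 => .disj φ (PDL.disjCopies φ k)

/-! `Θ_X` holds exactly on the subteams of `X`, since each `lineOf v` holds exactly on the
subteams of `{v}` and a disjunction of such formulas defines the union of the sets. `θ` holds
exactly on teams with at most one element, and splitting a team of size at most `a + b` into
pieces of sizes at most `a` and `b` shows that `l` disjuncts of `θ` hold exactly on teams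
with at most `l` elements. -/

theorem Set.exists_union_eq_encard_le_iff {α : Type*} (Y : Set α) (a b : ℕ∞) :
    (∃ A B, Y = A ∪ B ∧ A.encard ≤ a ∧ B.encard ≤ b) ↔ Y.encard ≤ a + b := by
  constructor
  · rintro ⟨A, B, rfl, hA, hB⟩
    exact (Set.encard_union_le A B).trans (add_le_add hA hB)
  · intro hY
    rcases le_or_gt Y.encard a with hYa | haY
    · exact ⟨Y, ∅, (Set.union_empty Y).symm, hYa, by simp⟩
    obtain ⟨A, hAY, hA⟩ := Set.exists_subset_encard_eq haY.le
    refine ⟨A, Y \ A, (Set.union_sdiff_cancel hAY).symm, hA.le, ?_⟩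
    have hsplit := Set.encard_sdiff_add_encard_of_subset hAY
    rw [hA] at hsplit
    rw [← hsplit, add_comm] at hY
    exact (ENat.add_le_add_iff_left haY.ne_top).1 hY

namespace PDL

variable {V : Type}

theorem tsat_bigConj (l : List (PDL V)) (Y : Set (V → Bool)) :
    tsat (bigConj l) Y ↔ ∀ φ ∈ l, tsat φ Y := by
  induction l with
  | nil => simp [bigConj, tsat]
  | cons φ l ih => simp only [bigConj, List.foldr_cons, tsat, List.forall_mem_cons, ← ih]

theorem tsat_bigDisj_map_iff_subset_biUnion {ι : Type} {f : ι → PDL V} {S : ι → Set (V → Bool)}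
    (hf : ∀ i Y, tsat (f i) Y ↔ Y ⊆ S i) (L : List ι) (Y : Set (V → Bool)) :
    tsat (bigDisj (L.map f)) Y ↔ Y ⊆ ⋃ i ∈ L, S i := by
  induction L generalizing Y with
  | nil => simp [bigDisj, tsat]
  | cons i L ih =>
    change (∃ A B, Y = A ∪ B ∧ tsat (f i) A ∧ tsat (bigDisj (L.map f)) B) ↔ _
    have hcons : ⋃ j ∈ i :: L, S j = S i ∪ ⋃ j ∈ L, S j := by ext; simp
    simp only [hf, ih, hcons]
    constructor
    · rintro ⟨A, B, rfl, hA, hB⟩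
      exact Set.union_subset_union hA hB
    · intro hY
      refine ⟨Y ∩ S i, Y \ S i, (Set.inter_union_sdiff Y _).symm, Set.inter_subset_right, ?_⟩
      rw [Set.sdiff_subset_iff]
      exact hY

theorem tsat_lineOf [Fintype V] (v : V → Bool) (Y : Set (V → Bool)) :
    tsat (lineOf v) Y ↔ Y ⊆ {v} := by
  simp only [lineOf, tsat_bigConj, List.forall_mem_map, Finset.mem_toList, Finset.mem_univ,
    forall_const]
  constructor
  · intro h w hw
    funext p
    have hp := h p
    cases hv : v p <;> simp only [hv] at hp <;> exact hp w hw
  · intro h p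
    cases hv : v p <;> intro w hw <;> rwa [Set.eq_of_mem_singleton (h hw)]

theorem tsat_Theta [Fintype V] (X : Finset (V → Bool)) (Y : Set (V → Bool)) :
    tsat (Theta X) Y ↔ Y ⊆ X := by
  rw [Theta, tsat_bigDisj_map_iff_subset_biUnion tsat_lineOf]
  congr!
  ext
  simp

theorem tsat_theta [Fintype V] (Y : Set (V → Bool)) :
    tsat (theta V) Y ↔ Y.encard ≤ 1 := by
  simp only [theta, tsat_bigConj, List.forall_mem_map, Finset.mem_toList, Finset.mem_univ,
    forall_const, tsat, List.not_mem_nil, IsEmpty.forall_iff, implies_true,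
    Set.encard_le_one_iff_subsingleton]
  exact ⟨fun h v hv w hw => funext fun p => h p v hv w hw,
    fun h p v hv w hw => congrFun (h hv hw) p⟩

theorem tsat_disjCopies_iff_encard_le {φ : PDL V}
    (hφ : ∀ Y, tsat φ Y ↔ Y.encard ≤ 1) (k : ℕ) (Y : Set (V → Bool)) :
    tsat (disjCopies φ k) Y ↔ Y.encard ≤ k + 1 := by
  induction k generalizing Y with
  | zero => simpa [disjCopies] using hφ Y
  | succ k ih =>
    change (∃ A B, Y = A ∪ B ∧ tsat φ A ∧ tsat (disjCopies φ k) B) ↔ _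
    simp only [hφ, ih, Set.exists_union_eq_encard_le_iff, Nat.cast_add, Nat.cast_one]
    rw [add_comm (1 : ℕ∞)]

end PDL

theorem cardinality_bounded_subteams_general {V : Type} [Fintype V]
    (l : ℕ) (hl : 1 ≤ l) (X : Finset (V → Bool)) (Y : Set (V → Bool)) :
    PDL.tsat (.conj (PDL.Theta X) (PDL.disjCopies (PDL.theta V) (l - 1))) Y ↔
      Y ⊆ (X : Set (V → Bool)) ∧ Y.ncard ≤ l := by
  change PDL.tsat _ Y ∧ PDL.tsat _ Y ↔ _
  rw [PDL.tsat_Theta, PDL.tsat_disjCopies_iff_encard_le PDL.tsat_theta,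
    ← Nat.cast_add_one, Nat.sub_add_cancel hl, Set.encard_le_coe_iff_finite_ncard_le]
  exact and_congr_right fun hYX => and_iff_right (X.finite_toSet.subset hYX)

/-- Cardinality-bounded subteam formulas: for `l ≥ 1`, a team `Y` satisfies
`Θ_X ∧ (θ ∨ ⋯ ∨ θ)` (with `l` disjuncts of `θ`) iff `Y ⊆ X` and `|Y| ≤ l`. -/
theorem cardinality_bounded_subteams {V : Type} [Fintype V] [Nonempty V]
    (l : ℕ) (hl : 1 ≤ l) (X : Finset (V → Bool)) (Y : Set (V → Bool)) :
    PDL.tsat (.conj (PDL.Theta X) (PDL.disjCopies (PDL.theta V) (l - 1))) Y ↔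
      Y ⊆ (X : Set (V → Bool)) ∧ Y.ncard ≤ l :=
  cardinality_bounded_subteams_general l hl X Y
end

section
/- Preferential reconstruction of classical entailment: let W_sub = (S, ℓ, ≺_sub) be the preferential model for PDL whose states are all nonempty teams over the finite set N, ℓ the identity, and Y ≺_sub X iff Y ⊊ X. Then for all PDL-formulas φ, ψ: φ ⊢_{W_sub} ψ if and only if every valuation v over N with v ⊨ᶜ φ^f satisfies v ⊨ᶜ ψ^f (classical entailment of the flattenings). -/
/-- PL-formulas in negation normal form over variables `V`. -/
inductive PL (V : Type) : Type
  | pos : V → PL V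
  | neg : V → PL V
  | bot : PL V
  | top : PL V
  | conj : PL V → PL V → PL V
  | disj : PL V → PL V → PL V

/-- Classical semantics of PL-formulas on single valuations. -/
def PL.csat {V : Type} : PL V → (V → Bool) → Prop
  | .pos p, v => v p = true
  | .neg p, v => v p = false
  | .bot, _ => False
  | .top, _ => True
  | .conj φ ψ, v => PL.csat φ v ∧ PL.csat ψ v
  | .disj φ ψ, v => PL.csat φ v ∨ PL.csat ψ v

/-- The flattening of a PDL-formula: replace every dependence atom by `⊤`. -/
def PDL.flatten {V : Type} : PDL V → PL V
  | .pos p => .pos p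
  | .neg p => .neg p
  | .bot => .bot
  | .top => .top
  | .dep _ _ => .top
  | .conj φ ψ => .conj φ.flatten ψ.flatten
  | .disj φ ψ => .disj φ.flatten ψ.flatten

/-- Preferential entailment `φ ⊢_{W_sub} ψ` for the preferential model
`W_sub` whose states are all nonempty teams, labelled by themselves, with
`Y ≺_sub X` iff `Y ⊊ X`: every nonempty team satisfying `φ` that has no
nonempty proper subteam satisfying `φ` must satisfy `ψ`. -/
def entSub {V : Type} (φ ψ : PDL V) : Prop :=
  ∀ X : Set (V → Bool), X.Nonempty → PDL.tsat φ X →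
    (∀ Y : Set (V → Bool), Y.Nonempty → PDL.tsat φ Y → ¬ Y ⊂ X) →
    PDL.tsat ψ X


lemma PDL.tsat_empty {V : Type} (φ : PDL V) : PDL.tsat φ (∅ : Set (V → Bool)) := by
  induction φ with
  | pos p => intro v hv; exact absurd hv (Set.notMem_empty v)
  | neg p => intro v hv; exact absurd hv (Set.notMem_empty v)
  | bot => rfl
  | top => trivial
  | dep as b => intro v hv; exact absurd hv (Set.notMem_empty v)
  | conj φ ψ ihφ ihψ => exact ⟨ihφ, ihψ⟩
  | disj φ ψ ihφ ihψ => exact ⟨∅, ∅, by simp, ihφ, ihψ⟩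

lemma PDL.tsat_mono {V : Type} (φ : PDL V) :
    ∀ X Y : Set (V → Bool), Y ⊆ X → PDL.tsat φ X → PDL.tsat φ Y := by
  induction φ with
  | pos p => intro X Y h hX v hv; exact hX v (h hv)
  | neg p => intro X Y h hX v hv; exact hX v (h hv)
  | bot => intro X Y h hX; subst hX; exact Set.eq_empty_of_subset_empty h
  | top => intro _ _ _ _; trivial
  | dep as b => intro X Y h hX v hv v' hv' hag; exact hX v (h hv) v' (h hv') hag
  | conj φ ψ ihφ ihψ => intro X Y h hX; exact ⟨ihφ X Y h hX.1, ihψ X Y h hX.2⟩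
  | disj φ ψ ihφ ihψ =>
      intro X Y h hX
      obtain ⟨A, B, hAB, hA, hB⟩ := hX
      refine ⟨Y ∩ A, Y ∩ B, ?_, ihφ A (Y ∩ A) Set.inter_subset_right hA,
        ihψ B (Y ∩ B) Set.inter_subset_right hB⟩
      rw [← Set.inter_union_distrib_left]
      rw [← hAB]
      exact (Set.inter_eq_left.mpr h).symm

lemma PDL.tsat_singleton {V : Type} (φ : PDL V) (v : V → Bool) :
    PDL.tsat φ {v} ↔ PL.csat φ.flatten v := by
  induction φ with
  | pos p =>
      simp only [PDL.tsat, PDL.flatten, PL.csat]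
      constructor
      · intro h; exact h v rfl
      · intro h w hw; cases hw; exact h
  | neg p =>
      simp only [PDL.tsat, PDL.flatten, PL.csat]
      constructor
      · intro h; exact h v rfl
      · intro h w hw; cases hw; exact h
  | bot =>
      simp only [PDL.tsat, PDL.flatten, PL.csat, iff_false]
      exact (Set.singleton_nonempty v).ne_empty
  | top => simp [PDL.tsat, PDL.flatten, PL.csat]
  | dep as b =>
      simp only [PDL.tsat, PDL.flatten, PL.csat, iff_true]
      intro w hw w' hw' _
      cases hw; cases hw'; rfl
  | conj φ ψ ihφ ihψ =>
      simp only [PDL.tsat, PDL.flatten, PL.csat]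
      exact and_congr ihφ ihψ
  | disj φ ψ ihφ ihψ =>
      simp only [PDL.tsat, PDL.flatten, PL.csat]
      constructor
      · rintro ⟨A, B, hAB, hA, hB⟩
        have hv : v ∈ A ∪ B := by rw [← hAB]; rfl
        cases hv with
        | inl h =>
            left
            have : A = {v} := Set.eq_singleton_iff_unique_mem.mpr
              ⟨h, fun w hw => by
                have : w ∈ ({v} : Set _) := hAB ▸ Set.mem_union_left B hw
                exact this⟩
            exact ihφ.mp (this ▸ hA)
        | inr h =>
            right
            have : B = {v} := Set.eq_singleton_iff_unique_mem.mpr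
              ⟨h, fun w hw => by
                have : w ∈ ({v} : Set _) := hAB ▸ Set.mem_union_right A hw
                exact this⟩
            exact ihψ.mp (this ▸ hB)
      · rintro (h | h)
        · exact ⟨{v}, ∅, by simp, ihφ.mpr h, PDL.tsat_empty ψ⟩
        · exact ⟨∅, {v}, by simp, PDL.tsat_empty φ, ihψ.mpr h⟩

/-- Preferential reconstruction of classical entailment:
`φ ⊢_{W_sub} ψ` iff `φ^f ⊨ᶜ ψ^f`. -/
theorem entSub_iff_classical_flattening {V : Type} [Fintype V] [Nonempty V]
    (φ ψ : PDL V) :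
    entSub φ ψ ↔
      ∀ v : V → Bool, PL.csat φ.flatten v → PL.csat ψ.flatten v := by
  constructor
  · intro h v hv
    have hφ : PDL.tsat φ {v} := (PDL.tsat_singleton φ v).mpr hv
    have hmin : ∀ Y : Set (V → Bool), Y.Nonempty → PDL.tsat φ Y → ¬ Y ⊂ ({v} : Set _) := by
      intro Y hY _ hsub
      obtain ⟨w, hw⟩ := hY
      have hwv : w = v := hsub.1 hw
      exact hsub.2 (by intro x hx; cases hx; exact hwv ▸ hw)
    exact (PDL.tsat_singleton ψ v).mp (h {v} (Set.singleton_nonempty v) hφ hmin)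
  · intro h X hX hφ hmin
    obtain ⟨v, hv⟩ := hX
    have hsing : X = {v} := by
      by_contra hne
      have hvφ : PDL.tsat φ {v} :=
        PDL.tsat_mono φ X {v} (Set.singleton_subset_iff.mpr hv) hφ
      exact hmin {v} (Set.singleton_nonempty v) hvφ
        ⟨Set.singleton_subset_iff.mpr hv, fun hXs =>
          hne (Set.Subset.antisymm hXs (Set.singleton_subset_iff.mpr hv))⟩
    subst hsing
    exact (PDL.tsat_singleton ψ v).mpr (h v ((PDL.tsat_singleton φ v).mp hφ))
end
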